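/- Fix integers n ≥ 2 and m with 0 ≤ m ≤ n−1, and real constants c_k for k = −m,…,n−1−m. Let H_{m,r}(λ,μ) = E_{m,r}(λ,μ) + Σ_{k=−m}^{n−1−m} c_k V_r^{(k)}(q(λ)) for r = 1,…,n, and F_{m,s} = {H_{m,s}, p_{n−m}} for s = 2,…,n. Then the 2n−1 functions H_{m,1},…,H_{m,n}, F_{m,2},…,F_{m,n} are functionally independent: there exists a point of the phase space at which their differentials (their gradients with respect to (λ,μ) ∈ ℝ^{2n}) are linearly independent. Consequently H_{m,1} is maximally superintegrable. -/

import Mathlib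

open Finset

noncomputable section

/-- Canonical Poisson bracket on the phase space `(Fin n → ℝ) × (Fin n → ℝ)`
(coordinates `(λ, μ)`). -/
def pbr (n : ℕ) (f g : (Fin n → ℝ) × (Fin n → ℝ) → ℝ)
    (x : (Fin n → ℝ) × (Fin n → ℝ)) : ℝ :=
  ∑ j : Fin n,
    (fderiv ℝ f x (Pi.single j 1, 0) * fderiv ℝ g x (0, Pi.single j 1) -
      fderiv ℝ g x (Pi.single j 1, 0) * fderiv ℝ f x (0, Pi.single j 1))

/-- `σ_k(λ)`, the `k`-th elementary symmetric polynomial of `λ¹,…,λⁿ`. -/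
def esym (n k : ℕ) (lam : Fin n → ℝ) : ℝ :=
  ∑ t ∈ Finset.powersetCard k (univ : Finset (Fin n)), ∏ i ∈ t, lam i

/-- `Δ_i = ∏_{j ≠ i} (λ^i - λ^j)`. -/
def Del (n : ℕ) (lam : Fin n → ℝ) (i : Fin n) : ℝ :=
  ∏ j ∈ univ.erase i, (lam i - lam j)

/-- Diagonal entry of the Killing tensor `K_r`: `K₁ = I`,
`K_r = Σ_{k=0}^{r-1} (-1)^k σ_k L^{r-1-k}` for `r ≥ 2`. -/
def Kd (n r : ℕ) (lam : Fin n → ℝ) (i : Fin n) : ℝ :=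
  if r = 1 then 1 else ∑ k ∈ range r, (-1 : ℝ) ^ k * esym n k lam * lam i ^ (r - 1 - k)

/-- Geodesic Hamiltonian `E_{m,r} = ½ μᵀ K_r G_m μ`, where `G_m = L^m G₀` is diagonal
with entries `(λ^i)^m / Δ_i`. -/
def Efun (n m r : ℕ) (x : (Fin n → ℝ) × (Fin n → ℝ)) : ℝ :=
  (1/2) * ∑ i : Fin n, Kd n r x.1 i * x.1 i ^ m / Del n x.1 i * x.2 i ^ 2

/-- `q^i(λ) = (−1)^i σ_i(λ)`; automatically `q⁰ = 1` and `q^i = 0` for `i > n`. -/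
def qf (n : ℕ) (lam : Fin n → ℝ) (i : ℕ) : ℝ := (-1 : ℝ) ^ i * esym n i lam

/-- Basic separable potentials with non-negative superscript: `Vpos k r q = V_r^{(k)}`.
`V_r^{(0)} = 0`, `V_r^{(1)} = -q^r`, `V_r^{(k+1)} = V_{r+1}^{(k)} + V_r^{(1)} V_1^{(k)}`. -/
def Vpos : ℕ → ℕ → (ℕ → ℝ) → ℝ
  | 0, _, _ => 0
  | 1, r, q => -q r
  | (k+2), r, q => Vpos (k+1) (r+1) q + (-q r) * Vpos (k+1) 1 q

/-- Basic separable potentials with negative superscript: `Vneg n k r q = V_r^{(-k)}`.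
`V_r^{(-1)} = -q^{r-1}/qⁿ`, `V_r^{(-k-1)} = V_{r-1}^{(-k)} + V_r^{(-1)} V_n^{(-k)}`. -/
def Vneg (n : ℕ) : ℕ → ℕ → (ℕ → ℝ) → ℝ
  | 0, _, _ => 0
  | 1, r, q => -q (r-1) / q n
  | (k+2), r, q => Vneg n (k+1) (r-1) q + (-q (r-1) / q n) * Vneg n (k+1) n q

/-- Basic separable potential `V_r^{(k)}` for any integer superscript `k`. -/
def Vk (n : ℕ) (k : ℤ) (r : ℕ) (q : ℕ → ℝ) : ℝ :=
  if 0 ≤ k then Vpos k.toNat r q else Vneg n (-k).toNat r q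

/-- The Hamiltonian `H_{m,r}(λ,μ) = E_{m,r}(λ,μ) + Σ_{k=-m}^{n-1-m} c_k V_r^{(k)}(q(λ))`. -/
def Hfun (n m : ℕ) (c : ℤ → ℝ) (r : ℕ) (x : (Fin n → ℝ) × (Fin n → ℝ)) : ℝ :=
  Efun n m r x +
    ∑ k ∈ Finset.Icc (-(m : ℤ)) ((n : ℤ) - 1 - (m : ℤ)), c k * Vk n k r (qf n x.1)

/-- `p_{n-m}(λ,μ) = -Σ_{k=1}ⁿ (λ^k)^m μ_k / Δ_k`. -/
def pnm (n m : ℕ) (x : (Fin n → ℝ) × (Fin n → ℝ)) : ℝ :=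
  -∑ k : Fin n, x.1 k ^ m * x.2 k / Del n x.1 k

/-- The additional integrals `F_{m,s} = {H_{m,s}, p_{n-m}}`. -/
def Ffun (n m : ℕ) (c : ℤ → ℝ) (s : ℕ) (x : (Fin n → ℝ) × (Fin n → ℝ)) : ℝ :=
  pbr n (Hfun n m c s) (pnm n m) x



-- ===================== auxiliary development =====================
namespace IndepAux

variable {n : ℕ}

abbrev PS (n : ℕ) := (Fin n → ℝ) × (Fin n → ℝ)

/-- elementary symmetric polynomial over a subset of indices -/
def esF (S : Finset (Fin n)) (k : ℕ) (lam : Fin n → ℝ) : ℝ :=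
  ∑ t ∈ Finset.powersetCard k S, ∏ i ∈ t, lam i

lemma esF_zero (S : Finset (Fin n)) (lam : Fin n → ℝ) : esF S 0 lam = 1 := by
  simp [esF]

lemma esF_split {S : Finset (Fin n)} {a : Fin n} (ha : a ∈ S) (k : ℕ) (lam : Fin n → ℝ) :
    esF S (k+1) lam = esF (S.erase a) (k+1) lam + lam a * esF (S.erase a) k lam := by
  classical
  have h1 : S = insert a (S.erase a) := (Finset.insert_erase ha).symm
  simp only [esF]
  conv_lhs => rw [h1, Finset.powersetCard_succ_insert (Finset.notMem_erase a S)]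
  rw [Finset.sum_union ?disj]
  case disj =>
    rw [Finset.disjoint_right]
    intro t ht hts
    obtain ⟨t', ht', rfl⟩ := Finset.mem_image.1 ht
    have : a ∈ insert a t' := Finset.mem_insert_self a t'
    exact (Finset.notMem_erase a S) ((Finset.mem_powersetCard.1 hts).1 this)
  congr 1
  rw [Finset.sum_image ?inj]
  case inj =>
    intro t ht t' ht' hinsert
    have hat : a ∉ t := fun hc => (Finset.notMem_erase a S)
      ((Finset.mem_powersetCard.1 ht).1 hc)
    have hat' : a ∉ t' := fun hc => (Finset.notMem_erase a S)
      ((Finset.mem_powersetCard.1 ht').1 hc)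
    rw [← Finset.erase_insert hat, hinsert, Finset.erase_insert hat']
  rw [Finset.mul_sum]
  refine Finset.sum_congr rfl fun t ht => ?_
  have hat : a ∉ t := fun hc => (Finset.notMem_erase a S)
    ((Finset.mem_powersetCard.1 ht).1 hc)
  rw [Finset.prod_insert hat]

lemma esF_update {S : Finset (Fin n)} {j : Fin n} (hj : j ∉ S) (k : ℕ) (lam : Fin n → ℝ)
    (v : ℝ) : esF S k (Function.update lam j v) = esF S k lam := by
  refine Finset.sum_congr rfl fun t ht => Finset.prod_congr rfl fun i hi => ?_
  have : i ≠ j := fun h => hj ((Finset.mem_powersetCard.1 ht).1 (h ▸ hi))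
  simp [Function.update_apply, this]


lemma esym_eq_esF (k : ℕ) (lam : Fin n → ℝ) : esym n k lam = esF univ k lam := rfl

lemma Kd_sum {r : ℕ} (hr : 1 ≤ r) (lam : Fin n → ℝ) (i : Fin n) :
    Kd n r lam i = ∑ k ∈ range r, (-1 : ℝ) ^ k * esym n k lam * lam i ^ (r - 1 - k) := by
  rcases eq_or_ne r 1 with h | h
  · subst h
    simp [Kd, esym_eq_esF, esF_zero]
  · simp [Kd, h]

lemma Kd_eq_esF {r : ℕ} (hr : 1 ≤ r) (lam : Fin n → ℝ) (i : Fin n) :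
    Kd n r lam i = (-1 : ℝ) ^ (r - 1) * esF (univ.erase i) (r - 1) lam := by
  induction r, hr using Nat.le_induction with
  | base => simp [Kd, esF_zero]
  | succ r hr ih =>
    rw [Kd_sum (by omega), Finset.sum_range_succ]
    have step : ∀ k ∈ range r, (-1 : ℝ) ^ k * esym n k lam * lam i ^ (r + 1 - 1 - k)
        = lam i * ((-1 : ℝ) ^ k * esym n k lam * lam i ^ (r - 1 - k)) := by
      intro k hk
      have hk' : k < r := Finset.mem_range.1 hk
      have : r + 1 - 1 - k = (r - 1 - k) + 1 := by omega
      rw [this, pow_succ]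
      ring
    rw [Finset.sum_congr rfl step, ← Finset.mul_sum, ← Kd_sum hr, ih]
    obtain ⟨r', rfl⟩ : ∃ r', r = r' + 1 := ⟨r - 1, by omega⟩
    have hsplit := esF_split (Finset.mem_univ i) r' lam
    rw [← esym_eq_esF] at hsplit
    have h1 : r' + 1 + 1 - 1 = r' + 1 := by omega
    have h2 : r' + 1 - 1 = r' := by omega
    have h3 : r' + 1 + 1 - 1 - (r' + 1) = 0 := by omega
    rw [h1, h2, Nat.sub_self, pow_zero, hsplit, pow_succ]
    ring

/-- Vieta evaluation identity -/
lemma prod_sub_eq (S : Finset (Fin n)) (lam : Fin n → ℝ) (x : ℝ) :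
    ∏ k ∈ S, (x - lam k)
      = ∑ r ∈ range (S.card + 1), (-1 : ℝ) ^ r * esF S r lam * x ^ (S.card - r) := by
  classical
  have hv := Multiset.prod_X_add_C_eq_sum_esymm (S.val.map (fun i => - lam i))
  have hcard : Multiset.card (S.val.map (fun i => - lam i)) = S.card := by simp
  have hes : ∀ r : ℕ, (S.val.map (fun i => - lam i)).esymm r = (-1 : ℝ)^r * esF S r lam := by
    intro r
    rw [Finset.esymm_map_val, esF, Finset.mul_sum]
    refine Finset.sum_congr rfl fun t ht => ?_
    have hc : t.card = r := (Finset.mem_powersetCard.1 ht).2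
    calc ∏ i ∈ t, -lam i = ∏ i ∈ t, (-1 : ℝ) * lam i := by
          refine Finset.prod_congr rfl fun i _ => by ring
      _ = (-1 : ℝ) ^ r * ∏ i ∈ t, lam i := by
          rw [Finset.prod_mul_distrib, Finset.prod_const, hc]
  have := congrArg (Polynomial.eval x) hv
  rw [Polynomial.eval_multiset_prod] at this
  simp only [Multiset.map_map, Function.comp] at this
  rw [Polynomial.eval_finset_sum] at this
  simp only [Polynomial.eval_mul, Polynomial.eval_pow, Polynomial.eval_C, Polynomial.eval_X,
    hcard, hes] at this
  rw [← this, Finset.prod_eq_multiset_prod]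
  simp [Multiset.map_map, Function.comp, sub_eq_add_neg]


lemma contDiff_finset_prod {E : Type*} [NormedAddCommGroup E] [NormedSpace ℝ E]
    {ι : Type*} (s : Finset ι) (f : ι → E → ℝ)
    (h : ∀ i ∈ s, ContDiff ℝ 2 (f i)) :
    ContDiff ℝ 2 (fun x => ∏ i ∈ s, f i x) := by
  classical
  induction s using Finset.cons_induction with
  | empty => simpa using contDiff_const
  | cons a s ha ih =>
    simp only [Finset.prod_cons]
    exact (h a (Finset.mem_cons_self a s)).mul
      (ih fun i hi => h i (Finset.mem_cons_of_mem hi))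

lemma contDiff_finset_sum {E : Type*} [NormedAddCommGroup E] [NormedSpace ℝ E]
    {ι : Type*} (s : Finset ι) (f : ι → E → ℝ)
    (h : ∀ i ∈ s, ContDiff ℝ 2 (f i)) :
    ContDiff ℝ 2 (fun x => ∑ i ∈ s, f i x) := by
  classical
  induction s using Finset.cons_induction with
  | empty => simpa using contDiff_const
  | cons a s ha ih =>
    simp only [Finset.sum_cons]
    exact (h a (Finset.mem_cons_self a s)).add
      (ih fun i hi => h i (Finset.mem_cons_of_mem hi))

lemma contDiff_coord (i : Fin n) : ContDiff ℝ 2 (fun lam : Fin n → ℝ => lam i) :=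
  contDiff_apply ℝ ℝ i

lemma contDiff_esym (k : ℕ) : ContDiff ℝ 2 (fun lam : Fin n → ℝ => esym n k lam) := by
  refine contDiff_finset_sum _ _ fun t _ => ?_
  exact contDiff_finset_prod _ _ fun i _ => contDiff_coord i

lemma contDiff_Del (i : Fin n) : ContDiff ℝ 2 (fun lam : Fin n → ℝ => Del n lam i) := by
  refine contDiff_finset_prod _ _ fun j _ => ?_
  exact (contDiff_coord i).sub (contDiff_coord j)

lemma contDiff_Kd (r : ℕ) (i : Fin n) :
    ContDiff ℝ 2 (fun lam : Fin n → ℝ => Kd n r lam i) := by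
  unfold Kd
  by_cases h : r = 1
  · simpa [h] using contDiff_const
  · simp only [h, if_false]
    refine contDiff_finset_sum _ _ fun k _ => ?_
    exact (contDiff_const.mul (contDiff_esym k)).mul ((contDiff_coord i).pow _)

lemma contDiff_qf (i : ℕ) : ContDiff ℝ 2 (fun lam : Fin n → ℝ => qf n lam i) :=
  contDiff_const.mul (contDiff_esym i)

lemma contDiff_Vpos : ∀ k r : ℕ, ContDiff ℝ 2 (fun lam : Fin n → ℝ => Vpos k r (qf n lam))
  | 0, r => by simpa [Vpos] using contDiff_const
  | 1, r => by simpa [Vpos] using (contDiff_qf r).neg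
  | (k+2), r => by
      simp only [Vpos]
      exact (contDiff_Vpos (k+1) (r+1)).add
        (((contDiff_qf r).neg).mul (contDiff_Vpos (k+1) 1))

lemma contDiffAt_Vneg {lam0 : Fin n → ℝ} (h : qf n lam0 n ≠ 0) :
    ∀ k r : ℕ, ContDiffAt ℝ 2 (fun lam : Fin n → ℝ => Vneg n k r (qf n lam)) lam0
  | 0, r => by simpa [Vneg] using contDiffAt_const
  | 1, r => by
      simp only [Vneg]
      exact ((contDiff_qf (r-1)).neg.contDiffAt).div (contDiff_qf n).contDiffAt h
  | (k+2), r => by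
      simp only [Vneg]
      exact (contDiffAt_Vneg h (k+1) (r-1)).add
        ((((contDiff_qf (r-1)).neg.contDiffAt).div (contDiff_qf n).contDiffAt h).mul
          (contDiffAt_Vneg h (k+1) n))

lemma contDiffAt_Vk {lam0 : Fin n → ℝ} (h : qf n lam0 n ≠ 0) (k : ℤ) (r : ℕ) :
    ContDiffAt ℝ 2 (fun lam : Fin n → ℝ => Vk n k r (qf n lam)) lam0 := by
  unfold Vk
  by_cases hk : 0 ≤ k
  · simpa [hk] using (contDiff_Vpos (n := n) k.toNat r).contDiffAt
  · simpa [hk] using contDiffAt_Vneg h (-k).toNat r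

/-- the potential part of `Hfun` -/
def Wf (n m : ℕ) (c : ℤ → ℝ) (r : ℕ) (lam : Fin n → ℝ) : ℝ :=
  ∑ k ∈ Finset.Icc (-(m : ℤ)) ((n : ℤ) - 1 - (m : ℤ)), c k * Vk n k r (qf n lam)

lemma Hfun_eq (m : ℕ) (c : ℤ → ℝ) (r : ℕ) (x : PS n) :
    Hfun n m c r x = Efun n m r x + Wf n m c r x.1 := rfl

lemma contDiffAt_Wf {lam0 : Fin n → ℝ} (h : qf n lam0 n ≠ 0) (m : ℕ) (c : ℤ → ℝ) (r : ℕ) :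
    ContDiffAt ℝ 2 (Wf n m c r) lam0 := by
  unfold Wf
  refine ContDiffAt.sum fun k _ => ?_
  exact contDiffAt_const.mul (contDiffAt_Vk h k r)

lemma contDiffAt_Efun {x0 : PS n} (hDel : ∀ i, Del n x0.1 i ≠ 0) (m r : ℕ) :
    ContDiffAt ℝ 2 (Efun n m r) x0 := by
  unfold Efun
  refine contDiffAt_const.mul (ContDiffAt.sum fun i _ => ?_)
  refine ContDiffAt.mul (ContDiffAt.div ?_ ?_ (hDel i)) ?_
  · exact (((contDiff_Kd r i).comp contDiff_fst).contDiffAt).mul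
      (((contDiff_coord i).comp contDiff_fst).contDiffAt.pow m)
  · exact ((contDiff_Del i).comp contDiff_fst).contDiffAt
  · exact (((contDiff_coord i).comp contDiff_snd).contDiffAt).pow 2

lemma contDiffAt_pnm {x0 : PS n} (hDel : ∀ i, Del n x0.1 i ≠ 0) (m : ℕ) :
    ContDiffAt ℝ 2 (pnm n m) x0 := by
  unfold pnm
  refine ContDiffAt.neg (ContDiffAt.sum fun k _ => ?_)
  refine ContDiffAt.div ?_ ?_ (hDel k)
  · exact (((contDiff_coord k).comp contDiff_fst).contDiffAt.pow m).mul
      (((contDiff_coord k).comp contDiff_snd).contDiffAt)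
  · exact ((contDiff_Del k).comp contDiff_fst).contDiffAt

lemma contDiffAt_Hfun {x0 : PS n} (hDel : ∀ i, Del n x0.1 i ≠ 0)
    (hq : qf n x0.1 n ≠ 0) (m : ℕ) (c : ℤ → ℝ) (r : ℕ) :
    ContDiffAt ℝ 2 (Hfun n m c r) x0 := by
  have : Hfun n m c r = fun x : PS n => Efun n m r x + Wf n m c r x.1 := rfl
  rw [this]
  exact (contDiffAt_Efun hDel m r).add
    ((contDiffAt_Wf hq m c r).comp x0 contDiffAt_fst)

lemma differentiableAt_Ffun {x0 : PS n} (hDel : ∀ i, Del n x0.1 i ≠ 0)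
    (hq : qf n x0.1 n ≠ 0) (m : ℕ) (c : ℤ → ℝ) (s : ℕ) :
    DifferentiableAt ℝ (Ffun n m c s) x0 := by
  have hH : ContDiffAt ℝ 1 (fderiv ℝ (Hfun n m c s)) x0 :=
    (contDiffAt_Hfun hDel hq m c s).fderiv_right (by norm_num)
  have hp : ContDiffAt ℝ 1 (fderiv ℝ (pnm n m)) x0 :=
    (contDiffAt_pnm hDel m).fderiv_right (by norm_num)
  have key : ∀ v : PS n, DifferentiableAt ℝ (fun y => fderiv ℝ (Hfun n m c s) y v) x0 ∧
      DifferentiableAt ℝ (fun y => fderiv ℝ (pnm n m) y v) x0 := fun v =>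
    ⟨(hH.clm_apply contDiffAt_const).differentiableAt one_ne_zero,
     (hp.clm_apply contDiffAt_const).differentiableAt one_ne_zero⟩
  unfold Ffun pbr
  refine DifferentiableAt.fun_sum fun j _ => DifferentiableAt.sub ?_ ?_
  · exact ((key _).1.mul (key _).2)
  · exact ((key _).2.mul (key _).1)


/-- `g_k = λ_k^m / Δ_k` as a function of `λ`. -/
def gfun (n m : ℕ) (lam : Fin n → ℝ) (k : Fin n) : ℝ := lam k ^ m / Del n lam k

/-- `K_r(i) g_i` as a function of `λ`. -/
def KGfun (n m r : ℕ) (lam : Fin n → ℝ) (i : Fin n) : ℝ :=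
  Kd n r lam i * lam i ^ m / Del n lam i

/-- directional derivative matrix of `g`. -/
def Gmat (n m : ℕ) (lam0 : Fin n → ℝ) (j k : Fin n) : ℝ :=
  deriv (fun u : ℝ => gfun n m (lam0 + u • (Pi.single j 1 : Fin n → ℝ)) k) 0

/-- directional derivative matrix of `K_r(i) g_i`. -/
def Dmat (n m r : ℕ) (lam0 : Fin n → ℝ) (j i : Fin n) : ℝ :=
  deriv (fun u : ℝ => KGfun n m r (lam0 + u • (Pi.single j 1 : Fin n → ℝ)) i) 0

/-- directional derivative of the potential sum. -/
def wcoef (n m : ℕ) (c : ℤ → ℝ) (r : ℕ) (lam0 : Fin n → ℝ) (j : Fin n) : ℝ :=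
  deriv (fun u : ℝ => Wf n m c r (lam0 + u • (Pi.single j 1 : Fin n → ℝ))) 0

lemma fderiv_eq_deriv_line {f : PS n → ℝ} {x v : PS n} (hf : DifferentiableAt ℝ f x) :
    fderiv ℝ f x v = deriv (fun u : ℝ => f (x + u • v)) 0 := by
  have hline : HasDerivAt (fun u : ℝ => x + u • v) v 0 := by
    simpa using ((hasDerivAt_id (0 : ℝ)).smul_const v).const_add x
  have hF : HasFDerivAt f (fderiv ℝ f x) ((fun u : ℝ => x + u • v) 0) := by
    simpa using hf.hasFDerivAt
  exact (hF.comp_hasDerivAt 0 hline).deriv.symm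

lemma hasDerivAt_affine (a b : ℝ) (u0 : ℝ) : HasDerivAt (fun u : ℝ => a + u * b) b u0 := by
  simpa using ((hasDerivAt_id u0).mul_const b).const_add a

lemma contDiff_line (lam0 : Fin n → ℝ) (v : Fin n → ℝ) :
    ContDiff ℝ 2 (fun u : ℝ => lam0 + u • v) :=
  contDiff_const.add (contDiff_id.smul contDiff_const)

lemma diffAt_comp_line {lam0 : Fin n → ℝ} {f : (Fin n → ℝ) → ℝ}
    (hf : ContDiffAt ℝ 2 f lam0) (v : Fin n → ℝ) :
    DifferentiableAt ℝ (fun u : ℝ => f (lam0 + u • v)) 0 := by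
  have h0 : ContDiffAt ℝ 2 f ((fun u : ℝ => lam0 + u • v) 0) := by simpa using hf
  exact (h0.comp 0 (contDiff_line lam0 v).contDiffAt).differentiableAt (by norm_num)

lemma contDiffAt_gfun {lam0 : Fin n → ℝ} (hDel : ∀ i, Del n lam0 i ≠ 0) (m : ℕ) (k : Fin n) :
    ContDiffAt ℝ 2 (fun lam => gfun n m lam k) lam0 :=
  (((contDiff_coord k).pow m).contDiffAt).div (contDiff_Del k).contDiffAt (hDel k)
lemma contDiffAt_KGfun {lam0 : Fin n → ℝ} (hDel : ∀ i, Del n lam0 i ≠ 0) (m r : ℕ) (i : Fin n) :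
    ContDiffAt ℝ 2 (fun lam => KGfun n m r lam i) lam0 :=
  (((contDiff_Kd r i).mul ((contDiff_coord i).pow m)).contDiffAt).div
    (contDiff_Del i).contDiffAt (hDel i)

/-- (L1) μ-derivative of pnm -/
lemma fderiv_pnm_mu {lam0 μ : Fin n → ℝ} (hDel : ∀ i, Del n lam0 i ≠ 0) (m : ℕ) (j : Fin n) :
    fderiv ℝ (pnm n m) (lam0, μ) ((0 : Fin n → ℝ), (Pi.single j 1 : Fin n → ℝ))
      = -(lam0 j ^ m / Del n lam0 j) := by
  rw [fderiv_eq_deriv_line (((contDiffAt_pnm (x0 := (lam0, μ)) hDel m)).differentiableAt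
    (by norm_num))]
  have hfun : (fun u : ℝ => pnm n m ((lam0, μ) + u • ((0 : Fin n → ℝ), (Pi.single j 1 : Fin n → ℝ))))
      = fun u : ℝ => -∑ k : Fin n, lam0 k ^ m * (μ k + u * (Pi.single j 1 : Fin n → ℝ) k) / Del n lam0 k := by
    funext u
    simp [pnm, Prod.fst_add, Prod.snd_add, Prod.smul_fst, Prod.smul_snd, smul_eq_mul,
      mul_comm]
  rw [hfun]
  have hd : HasDerivAt (fun u : ℝ => -∑ k : Fin n, lam0 k ^ m * (μ k + u * (Pi.single j 1 : Fin n → ℝ) k)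
      / Del n lam0 k) (-∑ k : Fin n, lam0 k ^ m * (Pi.single j 1 : Fin n → ℝ) k / Del n lam0 k) 0 := by
    refine HasDerivAt.neg (HasDerivAt.fun_sum fun k _ => ?_)
    exact ((hasDerivAt_affine (μ k) ((Pi.single j 1 : Fin n → ℝ) k) 0).const_mul (lam0 k ^ m)).div_const _
  rw [hd.deriv]
  congr 1
  rw [Finset.sum_eq_single j]
  · simp
  · intro k _ hk
    simp [Pi.single_apply, hk]
  · intro h; exact absurd (Finset.mem_univ j) h

/-- (L2) λ-derivative of pnm -/
lemma fderiv_pnm_la {lam0 μ : Fin n → ℝ} (hDel : ∀ i, Del n lam0 i ≠ 0) (m : ℕ) (j : Fin n) :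
    fderiv ℝ (pnm n m) (lam0, μ) ((Pi.single j 1 : Fin n → ℝ), (0 : Fin n → ℝ))
      = -∑ k : Fin n, μ k * Gmat n m lam0 j k := by
  rw [fderiv_eq_deriv_line (((contDiffAt_pnm (x0 := (lam0, μ)) hDel m)).differentiableAt
    (by norm_num))]
  have hfun : (fun u : ℝ => pnm n m ((lam0, μ) + u • ((Pi.single j 1 : Fin n → ℝ), (0 : Fin n → ℝ))))
      = fun u : ℝ => -∑ k : Fin n, gfun n m (lam0 + u • (Pi.single j 1 : Fin n → ℝ)) k * μ k := by
    funext u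
    simp only [pnm, gfun, Prod.fst_add, Prod.snd_add, Prod.smul_fst, Prod.smul_snd,
      smul_zero, add_zero]
    congr 1
    refine Finset.sum_congr rfl fun k _ => ?_
    rw [mul_div_right_comm]
  rw [hfun]
  have hd : HasDerivAt
      (fun u : ℝ => -∑ k : Fin n, gfun n m (lam0 + u • (Pi.single j 1 : Fin n → ℝ)) k * μ k)
      (-∑ k : Fin n, Gmat n m lam0 j k * μ k) 0 := by
    refine HasDerivAt.neg (HasDerivAt.fun_sum fun k _ => ?_)
    exact ((diffAt_comp_line (contDiffAt_gfun hDel m k) _).hasDerivAt).mul_const (μ k)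
  rw [hd.deriv]
  congr 1
  exact Finset.sum_congr rfl fun k _ => mul_comm _ _

/-- (L3) μ-derivative of Hfun -/
lemma fderiv_Hfun_mu {lam0 μ : Fin n → ℝ} (hDel : ∀ i, Del n lam0 i ≠ 0)
    (hq : qf n lam0 n ≠ 0) (m : ℕ) (c : ℤ → ℝ) (r : ℕ) (j : Fin n) :
    fderiv ℝ (Hfun n m c r) (lam0, μ) ((0 : Fin n → ℝ), (Pi.single j 1 : Fin n → ℝ))
      = KGfun n m r lam0 j * μ j := by
  rw [fderiv_eq_deriv_line (((contDiffAt_Hfun (x0 := (lam0, μ)) hDel hq m c r)).differentiableAt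
    (by norm_num))]
  have hfun : (fun u : ℝ => Hfun n m c r ((lam0, μ) + u • ((0 : Fin n → ℝ), (Pi.single j 1 : Fin n → ℝ))))
      = fun u : ℝ => (1/2) * ∑ i : Fin n, KGfun n m r lam0 i * (μ i + u * (Pi.single j 1 : Fin n → ℝ) i) ^ 2
          + Wf n m c r lam0 := by
    funext u
    simp only [Hfun, Efun, Wf, KGfun, Prod.fst_add, Prod.snd_add, Prod.smul_fst, Prod.smul_snd,
      smul_zero, add_zero, Pi.add_apply, Pi.smul_apply, Pi.zero_apply, smul_eq_mul]
  rw [hfun]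
  have hd : HasDerivAt (fun u : ℝ => (1/2) * ∑ i : Fin n,
      KGfun n m r lam0 i * (μ i + u * (Pi.single j 1 : Fin n → ℝ) i) ^ 2 + Wf n m c r lam0)
      ((1/2) * ∑ i : Fin n, KGfun n m r lam0 i *
        (2 * (μ i + 0 * (Pi.single j 1 : Fin n → ℝ) i) ^ 1 * (Pi.single j 1 : Fin n → ℝ) i)) 0 := by
    refine HasDerivAt.add_const _ (HasDerivAt.const_mul _ (HasDerivAt.fun_sum fun i _ => ?_))
    exact ((hasDerivAt_affine (μ i) ((Pi.single j 1 : Fin n → ℝ) i) 0).pow 2).const_mul _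
  rw [hd.deriv, Finset.sum_eq_single j]
  · simp; ring
  · intro k _ hk
    simp [Pi.single_apply, hk]
  · intro h; exact absurd (Finset.mem_univ j) h

/-- (L4) λ-derivative of Hfun -/
lemma fderiv_Hfun_la {lam0 μ : Fin n → ℝ} (hDel : ∀ i, Del n lam0 i ≠ 0)
    (hq : qf n lam0 n ≠ 0) (m : ℕ) (c : ℤ → ℝ) (r : ℕ) (j : Fin n) :
    fderiv ℝ (Hfun n m c r) (lam0, μ) ((Pi.single j 1 : Fin n → ℝ), (0 : Fin n → ℝ))
      = (1/2) * (∑ i : Fin n, Dmat n m r lam0 j i * μ i ^ 2) + wcoef n m c r lam0 j := by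
  rw [fderiv_eq_deriv_line (((contDiffAt_Hfun (x0 := (lam0, μ)) hDel hq m c r)).differentiableAt
    (by norm_num))]
  have hfun : (fun u : ℝ => Hfun n m c r ((lam0, μ) + u • ((Pi.single j 1 : Fin n → ℝ), (0 : Fin n → ℝ))))
      = fun u : ℝ => (1/2) * ∑ i : Fin n, KGfun n m r (lam0 + u • (Pi.single j 1 : Fin n → ℝ)) i * μ i ^ 2
          + Wf n m c r (lam0 + u • (Pi.single j 1 : Fin n → ℝ)) := by
    funext u
    simp only [Hfun, Efun, Wf, KGfun, Prod.fst_add, Prod.snd_add, Prod.smul_fst, Prod.smul_snd,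
      smul_zero, add_zero]
  rw [hfun]
  have hd : HasDerivAt (fun u : ℝ => (1/2) * ∑ i : Fin n,
      KGfun n m r (lam0 + u • (Pi.single j 1 : Fin n → ℝ)) i * μ i ^ 2
        + Wf n m c r (lam0 + u • (Pi.single j 1 : Fin n → ℝ)))
      ((1/2) * (∑ i : Fin n, Dmat n m r lam0 j i * μ i ^ 2) + wcoef n m c r lam0 j) 0 := by
    refine HasDerivAt.add (HasDerivAt.const_mul _ (HasDerivAt.fun_sum fun i _ => ?_)) ?_
    · exact ((diffAt_comp_line (contDiffAt_KGfun hDel m r i) _).hasDerivAt).mul_const (μ i ^ 2)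
    · exact (diffAt_comp_line (contDiffAt_Wf hq m c r) _).hasDerivAt
  exact hd.deriv

/-- (L1') restated -/
lemma fderiv_pnm_mu' {lam0 μ : Fin n → ℝ} (hDel : ∀ i, Del n lam0 i ≠ 0) (m : ℕ) (j : Fin n) :
    fderiv ℝ (pnm n m) (lam0, μ) ((0 : Fin n → ℝ), (Pi.single j 1 : Fin n → ℝ))
      = -(gfun n m lam0 j) :=
  fderiv_pnm_mu hDel m j

/-- (L5) explicit formula for Ffun along the μ-slice -/
lemma Ffun_eq {lam0 : Fin n → ℝ} (hDel : ∀ i, Del n lam0 i ≠ 0)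
    (hq : qf n lam0 n ≠ 0) (m : ℕ) (c : ℤ → ℝ) (s : ℕ) (μ : Fin n → ℝ) :
    Ffun n m c s (lam0, μ) = ∑ j : Fin n,
      (((1/2) * (∑ i : Fin n, Dmat n m s lam0 j i * μ i ^ 2) + wcoef n m c s lam0 j)
          * (-(gfun n m lam0 j))
        - (-∑ k : Fin n, μ k * Gmat n m lam0 j k) * (KGfun n m s lam0 j * μ j)) := by
  unfold Ffun pbr
  refine Finset.sum_congr rfl fun j _ => ?_
  rw [fderiv_Hfun_la hDel hq, fderiv_Hfun_mu hDel hq, fderiv_pnm_la hDel, fderiv_pnm_mu' hDel]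

/-- (L6) μ-derivative of Ffun at the special point -/
lemma fderiv_Ffun_mu {lam0 : Fin n → ℝ} (hDel : ∀ i, Del n lam0 i ≠ 0)
    (hq : qf n lam0 n ≠ 0) (m : ℕ) (c : ℤ → ℝ) (s : ℕ) (t : ℝ) (a l : Fin n) (hla : l ≠ a) :
    fderiv ℝ (Ffun n m c s) (lam0, (Pi.single a t : Fin n → ℝ))
        ((0 : Fin n → ℝ), (Pi.single l 1 : Fin n → ℝ))
      = t * (Gmat n m lam0 a l * KGfun n m s lam0 a
          + Gmat n m lam0 l a * KGfun n m s lam0 l) := by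
  rw [fderiv_eq_deriv_line
    (differentiableAt_Ffun (x0 := (lam0, (Pi.single a t : Fin n → ℝ))) hDel hq m c s)]
  set P : Fin n → ℝ := Pi.single a t with hP
  set sv : Fin n → ℝ := Pi.single l 1 with hsv
  have hfun : (fun u : ℝ => Ffun n m c s ((lam0, P) + u • ((0 : Fin n → ℝ), sv)))
      = fun u : ℝ => ∑ j : Fin n,
      (((1/2) * (∑ i : Fin n, Dmat n m s lam0 j i * (P i + u * sv i) ^ 2)
            + wcoef n m c s lam0 j) * (-(gfun n m lam0 j))
        - (-∑ k : Fin n, (P k + u * sv k) * Gmat n m lam0 j k)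
            * (KGfun n m s lam0 j * (P j + u * sv j))) := by
    funext u
    have hx : ((lam0, P) + u • ((0 : Fin n → ℝ), sv)) = (lam0, fun i => P i + u * sv i) := by
      ext i
      · simp
      · simp
    rw [hx, Ffun_eq hDel hq]
  rw [hfun]
  have hd : HasDerivAt (fun u : ℝ => ∑ j : Fin n,
      (((1/2) * (∑ i : Fin n, Dmat n m s lam0 j i * (P i + u * sv i) ^ 2)
            + wcoef n m c s lam0 j) * (-(gfun n m lam0 j))
        - (-∑ k : Fin n, (P k + u * sv k) * Gmat n m lam0 j k)
            * (KGfun n m s lam0 j * (P j + u * sv j))))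
      (∑ j : Fin n,
      (((1/2) * (∑ i : Fin n, Dmat n m s lam0 j i * (2 * (P i + 0 * sv i) ^ 1 * sv i)))
            * (-(gfun n m lam0 j))
        - ((-∑ k : Fin n, sv k * Gmat n m lam0 j k) * (KGfun n m s lam0 j * (P j + 0 * sv j))
          + (-∑ k : Fin n, (P k + 0 * sv k) * Gmat n m lam0 j k)
            * (KGfun n m s lam0 j * sv j)))) 0 := by
    refine HasDerivAt.fun_sum fun j _ => HasDerivAt.sub ?_ ?_
    · refine HasDerivAt.mul_const ?_ _
      refine HasDerivAt.add_const _ (HasDerivAt.const_mul _ (HasDerivAt.fun_sum fun i _ => ?_))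
      exact ((hasDerivAt_affine (P i) (sv i) 0).pow 2).const_mul _
    · refine HasDerivAt.mul ?_ ?_
      · refine HasDerivAt.neg (HasDerivAt.fun_sum fun k _ => ?_)
        exact (hasDerivAt_affine (P k) (sv k) 0).mul_const _
      · exact (hasDerivAt_affine (P j) (sv j) 0).const_mul _
  rw [hd.deriv]
  have hsva : sv a = 0 := by
    simp [hsv, Pi.single_apply, (Ne.symm hla : a ≠ l)]
  have hPl : P l = 0 := by simp [hP, Pi.single_apply, hla]
  have hPa : P a = t := by simp [hP]
  have hsvl : sv l = (1:ℝ) := by simp [hsv]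
  have h1 : ∀ j : Fin n,
      (∑ i : Fin n, Dmat n m s lam0 j i * (2 * (P i + 0 * sv i) ^ 1 * sv i)) = 0 := by
    intro j
    refine Finset.sum_eq_zero fun i _ => ?_
    have : P i * sv i = 0 := by
      rcases eq_or_ne i a with rfl | hia
      · rw [hsva, mul_zero]
      · have : P i = 0 := by simp [hP, Pi.single_apply, hia]
        rw [this, zero_mul]
    rw [zero_mul, add_zero, pow_one, show (2:ℝ) * P i * sv i = 2 * (P i * sv i) by ring, this]
    ring
  have h2 : ∀ j, (∑ k : Fin n, sv k * Gmat n m lam0 j k) = Gmat n m lam0 j l := by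
    intro j
    rw [Finset.sum_eq_single l]
    · rw [hsvl, one_mul]
    · intro k _ hk
      have : sv k = 0 := by simp [hsv, Pi.single_apply, hk]
      rw [this, zero_mul]
    · intro h; exact absurd (Finset.mem_univ l) h
  have h3 : ∀ j, (∑ k : Fin n, (P k + 0 * sv k) * Gmat n m lam0 j k)
      = t * Gmat n m lam0 j a := by
    intro j
    rw [Finset.sum_eq_single a]
    · rw [hPa, zero_mul, add_zero]
    · intro k _ hk
      have : P k = 0 := by simp [hP, Pi.single_apply, hk]
      rw [this, zero_mul, zero_add, zero_mul]
    · intro h; exact absurd (Finset.mem_univ a) h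
  have hterm : ∀ j ∈ (univ : Finset (Fin n)),
      ((1 / 2 * ∑ i : Fin n, Dmat n m s lam0 j i * (2 * (P i + 0 * sv i) ^ 1 * sv i))
          * -gfun n m lam0 j -
        ((-∑ k : Fin n, sv k * Gmat n m lam0 j k) * (KGfun n m s lam0 j * (P j + 0 * sv j)) +
          (-∑ k : Fin n, (P k + 0 * sv k) * Gmat n m lam0 j k) * (KGfun n m s lam0 j * sv j)))
      = ((if j = a then t * (Gmat n m lam0 a l * KGfun n m s lam0 a) else 0)
        + (if j = l then t * (Gmat n m lam0 l a * KGfun n m s lam0 l) else 0)) := by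
    intro j _
    rw [h1 j, h2 j, h3 j]
    rcases eq_or_ne j a with rfl | hja
    · rw [if_pos rfl, if_neg (Ne.symm hla), hPa, hsva]
      ring
    · rcases eq_or_ne j l with rfl | hjl
      · rw [if_neg hja, if_pos rfl, hPl, hsvl]
        ring
      · have hPj : P j = 0 := by simp [hP, Pi.single_apply, hja]
        have hsvj : sv j = 0 := by simp [hsv, Pi.single_apply, hjl]
        rw [if_neg hja, if_neg hjl, hPj, hsvj]
        ring
  rw [Finset.sum_congr rfl hterm, Finset.sum_add_distrib,
    Finset.sum_ite_eq' univ a, Finset.sum_ite_eq' univ l]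
  simp only [Finset.mem_univ, if_pos]
  ring

section Explicit

variable {lam0 : Fin n → ℝ}

lemma line_eq_update (lam0 : Fin n → ℝ) (j : Fin n) (u : ℝ) :
    lam0 + u • (Pi.single j 1 : Fin n → ℝ) = Function.update lam0 j (lam0 j + u) := by
  funext i
  rcases eq_or_ne i j with rfl | hij
  · simp
  · simp [Pi.single_apply, hij, Function.update_apply]

lemma Del_update_ne {j k : Fin n} (hkj : k ≠ j) (v : ℝ) :
    Del n (Function.update lam0 j v) k
      = (lam0 k - v) * ∏ i ∈ (univ.erase k).erase j, (lam0 k - lam0 i) := by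
  have hj : j ∈ univ.erase k := Finset.mem_erase.2 ⟨Ne.symm hkj, Finset.mem_univ j⟩
  rw [Del, ← Finset.mul_prod_erase _ _ hj]
  congr 1
  · rw [Function.update_apply, if_neg hkj, Function.update_apply, if_pos rfl]
  · refine Finset.prod_congr rfl fun i hi => ?_
    have hij : i ≠ j := (Finset.mem_erase.1 hi).1
    rw [Function.update_apply, if_neg hkj, Function.update_apply, if_neg hij]

lemma Del_update_self (j : Fin n) (v : ℝ) :
    Del n (Function.update lam0 j v) j = ∏ i ∈ univ.erase j, (v - lam0 i) := by
  rw [Del]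
  refine Finset.prod_congr rfl fun i hi => ?_
  have hij : i ≠ j := (Finset.mem_erase.1 hi).1
  rw [Function.update_apply, if_pos rfl, Function.update_apply, if_neg hij]

lemma Del_factor {j k : Fin n} (hkj : k ≠ j) :
    Del n lam0 k = (lam0 k - lam0 j) * ∏ i ∈ (univ.erase k).erase j, (lam0 k - lam0 i) := by
  have hj : j ∈ univ.erase k := Finset.mem_erase.2 ⟨Ne.symm hkj, Finset.mem_univ j⟩
  rw [Del, ← Finset.mul_prod_erase _ _ hj]

variable (hinj : Function.Injective lam0)
include hinj

lemma sub_ne (hjk : j ≠ k) : lam0 j - lam0 k ≠ 0 :=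
  sub_ne_zero.2 fun h => hjk (hinj h)

lemma Delp_ne (k j : Fin n) : (∏ i ∈ (univ.erase k).erase j, (lam0 k - lam0 i)) ≠ 0 := by
  refine Finset.prod_ne_zero_iff.2 fun i hi => ?_
  have : i ≠ k := (Finset.mem_erase.1 (Finset.mem_erase.1 hi).2).1
  exact sub_ne hinj (Ne.symm this)

lemma Del_ne (k : Fin n) : Del n lam0 k ≠ 0 := by
  refine Finset.prod_ne_zero_iff.2 fun i hi => ?_
  exact sub_ne hinj (Ne.symm (Finset.mem_erase.1 hi).1)

/-- off-diagonal entries of Gmat -/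
lemma Gmat_offdiag {j k : Fin n} (hjk : j ≠ k) (m : ℕ) :
    Gmat n m lam0 j k = gfun n m lam0 k / (lam0 k - lam0 j) := by
  have hb : lam0 k - lam0 j ≠ 0 := sub_ne hinj (Ne.symm hjk)
  have hD : (∏ i ∈ (univ.erase k).erase j, (lam0 k - lam0 i)) ≠ 0 := Delp_ne hinj k j
  set D : ℝ := ∏ i ∈ (univ.erase k).erase j, (lam0 k - lam0 i)
  set b : ℝ := lam0 k - lam0 j
  have hfun : (fun u : ℝ => gfun n m (lam0 + u • (Pi.single j 1 : Fin n → ℝ)) k)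
      = fun u : ℝ => lam0 k ^ m / ((b - u) * D) := by
    funext u
    rw [line_eq_update, gfun, Del_update_ne (Ne.symm hjk), Function.update_apply,
      if_neg (Ne.symm hjk)]
    congr 2
    ring
  have hden : HasDerivAt (fun u : ℝ => (b - u) * D) (-D) 0 := by
    have : HasDerivAt (fun u : ℝ => b - u) (-1) 0 := (hasDerivAt_id 0).const_sub b
    simpa using this.mul_const D
  have hdval : (b - 0) * D ≠ 0 := by
    rw [sub_zero]; exact mul_ne_zero hb hD
  have hd : HasDerivAt (fun u : ℝ => lam0 k ^ m / ((b - u) * D))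
      ((0 * ((b - 0) * D) - lam0 k ^ m * (-D)) / ((b - 0) * D) ^ 2) 0 :=
    (hasDerivAt_const 0 (lam0 k ^ m)).div hden hdval
  rw [Gmat, hfun, hd.deriv, gfun, Del_factor (Ne.symm hjk)]
  change _ = lam0 k ^ m / (b * D) / b
  field_simp
  ring

/-- diagonal entries of Gmat -/
lemma Gmat_diag (j : Fin n) (m : ℕ) :
    Gmat n m lam0 j j = ((m : ℝ) * lam0 j ^ (m - 1) * Del n lam0 j
        - lam0 j ^ m * (∑ k ∈ univ.erase j, ∏ i ∈ (univ.erase j).erase k, (lam0 j - lam0 i)))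
      / (Del n lam0 j) ^ 2 := by
  have hfun : (fun u : ℝ => gfun n m (lam0 + u • (Pi.single j 1 : Fin n → ℝ)) j)
      = fun u : ℝ => (lam0 j + u) ^ m / ∏ i ∈ univ.erase j, ((lam0 j + u) - lam0 i) := by
    funext u
    rw [line_eq_update, gfun, Del_update_self, Function.update_apply, if_pos rfl]
  have hnum : HasDerivAt (fun u : ℝ => (lam0 j + u) ^ m)
      ((m : ℝ) * (lam0 j + 0) ^ (m - 1) * 1) 0 := by
    have hbase : HasDerivAt (fun u : ℝ => lam0 j + u) 1 0 := (hasDerivAt_id 0).const_add _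
    exact hbase.pow m
  have hden : HasDerivAt (fun u : ℝ => ∏ i ∈ univ.erase j, ((lam0 j + u) - lam0 i))
      (∑ k ∈ univ.erase j, (∏ i ∈ (univ.erase j).erase k, ((lam0 j + 0) - lam0 i)) • (1:ℝ))
      0 := by
    refine HasDerivAt.fun_finsetProd fun i _ => ?_
    exact ((hasDerivAt_id 0).const_add (lam0 j)).sub_const (lam0 i)
  have hdval : (∏ i ∈ univ.erase j, ((lam0 j + 0) - lam0 i)) ≠ 0 := by
    rw [show (∏ i ∈ univ.erase j, ((lam0 j + 0) - lam0 i)) = Del n lam0 j by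
      rw [Del]; exact Finset.prod_congr rfl fun i _ => by rw [add_zero]]
    exact Del_ne hinj j
  have hd := hnum.fun_div hden hdval
  rw [Gmat, hfun, hd.deriv]
  have e1 : (∏ i ∈ univ.erase j, ((lam0 j + 0) - lam0 i)) = Del n lam0 j := by
    rw [Del]; exact Finset.prod_congr rfl fun i _ => by rw [add_zero]
  have e2 : (∑ k ∈ univ.erase j, (∏ i ∈ (univ.erase j).erase k, ((lam0 j + 0) - lam0 i)) • (1:ℝ))
      = ∑ k ∈ univ.erase j, ∏ i ∈ (univ.erase j).erase k, (lam0 j - lam0 i) := by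
    refine Finset.sum_congr rfl fun k _ => ?_
    rw [smul_eq_mul, mul_one]
    exact Finset.prod_congr rfl fun i _ => by rw [add_zero]
  rw [e1, e2, add_zero, mul_one]

/-- off-diagonal D entries -/
lemma Dmat_offdiag {j a : Fin n} (hja : j ≠ a) {r : ℕ} (hr : 1 ≤ r) (m : ℕ) :
    Dmat n m r lam0 j a
      = (-1 : ℝ)^(r-1) * esF (univ.erase j) (r-1) lam0 * gfun n m lam0 a
          / (lam0 a - lam0 j) := by
  have hb : lam0 a - lam0 j ≠ 0 := sub_ne hinj (Ne.symm hja)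
  have hD : (∏ i ∈ (univ.erase a).erase j, (lam0 a - lam0 i)) ≠ 0 := Delp_ne hinj a j
  set D : ℝ := ∏ i ∈ (univ.erase a).erase j, (lam0 a - lam0 i) with hDdef
  set b : ℝ := lam0 a - lam0 j with hbdef
  rcases Nat.lt_or_ge r 2 with h2 | h2
  · -- r = 1
    have : r = 1 := by omega
    subst this
    have hfun : (fun u : ℝ => KGfun n m 1 (lam0 + u • (Pi.single j 1 : Fin n → ℝ)) a)
        = fun u : ℝ => gfun n m (lam0 + u • (Pi.single j 1 : Fin n → ℝ)) a := by
      funext u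
      rw [KGfun, gfun, Kd, if_pos rfl, one_mul]
    rw [Dmat, hfun, ← Gmat, Gmat_offdiag hinj hja m, esF_zero]
    norm_num
    rfl
  · obtain ⟨k, rfl⟩ : ∃ k, r = k + 2 := ⟨r - 2, by omega⟩
    have hja' : a ≠ j := Ne.symm hja
    have hjmem : j ∈ univ.erase a := Finset.mem_erase.2 ⟨hja, Finset.mem_univ j⟩
    have hjS2 : j ∉ (univ.erase a).erase j := Finset.notMem_erase j _
    set A : ℝ := esF ((univ.erase a).erase j) (k+1) lam0 with hAdef
    set B : ℝ := esF ((univ.erase a).erase j) k lam0 with hBdef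
    have hfun : (fun u : ℝ => KGfun n m (k+2) (lam0 + u • (Pi.single j 1 : Fin n → ℝ)) a)
        = fun u : ℝ => ((-1 : ℝ)^(k+1) * (A + (lam0 j + u) * B) * lam0 a ^ m)
            / ((b - u) * D) := by
      funext u
      rw [line_eq_update, KGfun, Kd_eq_esF (by omega), Del_update_ne hja',
        Function.update_apply, if_neg hja']
      have hk21 : k + 2 - 1 = k + 1 := by omega
      rw [hk21, esF_split hjmem k, esF_update hjS2, esF_update hjS2,
        Function.update_apply, if_pos rfl]
      congr 1
      · ring
    have hnum : HasDerivAt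
        (fun u : ℝ => (-1 : ℝ)^(k+1) * (A + (lam0 j + u) * B) * lam0 a ^ m)
        ((-1 : ℝ)^(k+1) * (1 * B) * lam0 a ^ m) 0 := by
      have h1 : HasDerivAt (fun u : ℝ => A + (lam0 j + u) * B) (1 * B) 0 :=
        (((hasDerivAt_id 0).const_add (lam0 j)).mul_const B).const_add A
      exact (h1.const_mul _).mul_const _
    have hden : HasDerivAt (fun u : ℝ => (b - u) * D) (-1 * D) 0 :=
      ((hasDerivAt_id 0).const_sub b).mul_const D
    have hdval : (b - 0) * D ≠ 0 := by
      rw [sub_zero]; exact mul_ne_zero hb hD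
    have hd := hnum.fun_div hden hdval
    rw [Dmat, hfun, hd.deriv]
    have hesF : esF (univ.erase j) (k+2-1) lam0 = A + lam0 a * B := by
      have hamem : a ∈ univ.erase j := Finset.mem_erase.2 ⟨hja', Finset.mem_univ a⟩
      have hk21 : k + 2 - 1 = k + 1 := by omega
      rw [hk21, esF_split hamem k, Finset.erase_right_comm]
    rw [hesF, gfun, Del_factor (k := a) (j := j) hja', ← hbdef, ← hDdef]
    field_simp
    rw [show k + 2 - 1 = k + 1 by omega, hbdef]
    ring

/-- diagonal D entries -/
lemma Dmat_diag (a : Fin n) {r : ℕ} (hr : 1 ≤ r) (m : ℕ) :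
    Dmat n m r lam0 a a
      = (-1 : ℝ)^(r-1) * esF (univ.erase a) (r-1) lam0 * Gmat n m lam0 a a := by
  have hfun : (fun u : ℝ => KGfun n m r (lam0 + u • (Pi.single a 1 : Fin n → ℝ)) a)
      = fun u : ℝ => ((-1 : ℝ)^(r-1) * esF (univ.erase a) (r-1) lam0)
          * gfun n m (lam0 + u • (Pi.single a 1 : Fin n → ℝ)) a := by
    funext u
    rw [line_eq_update, KGfun, gfun, Kd_eq_esF hr, esF_update (Finset.notMem_erase a _),
      mul_div_assoc, mul_assoc]
  have hg : HasDerivAt (fun u : ℝ => gfun n m (lam0 + u • (Pi.single a 1 : Fin n → ℝ)) a)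
      (Gmat n m lam0 a a) 0 :=
    (diffAt_comp_line (contDiffAt_gfun (Del_ne hinj) m a) _).hasDerivAt
  rw [Dmat, hfun, (hg.const_mul _).deriv]

end Explicit


lemma sum_esF_eval (hn : 1 ≤ n) {lam : Fin n → ℝ} (hinj : Function.Injective lam)
    (j l : Fin n) :
    ∑ r ∈ range n, (-1 : ℝ) ^ r * esF (univ.erase j) r lam * lam l ^ (n - 1 - r)
      = if l = j then Del n lam j else 0 := by
  have hcard : (univ.erase j).card = n - 1 := by
    rw [Finset.card_erase_of_mem (Finset.mem_univ j), Finset.card_univ, Fintype.card_fin]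
  have h := prod_sub_eq (univ.erase j) lam (lam l)
  rw [hcard, show n - 1 + 1 = n by omega] at h
  rw [← h]
  rcases eq_or_ne l j with rfl | hlj
  · rw [if_pos rfl]; rfl
  · rw [if_neg hlj]
    exact Finset.prod_eq_zero (Finset.mem_erase.2 ⟨hlj, Finset.mem_univ l⟩) (sub_self _)

/-- the matrix of elementary symmetric polys with one variable removed is nonsingular -/
lemma det_Y_ne (hn : 1 ≤ n) {lam : Fin n → ℝ} (hinj : Function.Injective lam) :
    (Matrix.of fun j r : Fin n => esF (univ.erase j) (r : ℕ) lam).det ≠ 0 := by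
  classical
  set Ym : Matrix (Fin n) (Fin n) ℝ := Matrix.of fun j r : Fin n => esF (univ.erase j) (r : ℕ) lam
  set Vm : Matrix (Fin n) (Fin n) ℝ := Matrix.of fun l r : Fin n => lam l ^ (n - 1 - (r : ℕ))
  set Sm : Matrix (Fin n) (Fin n) ℝ :=
    Matrix.of fun r j : Fin n => (-1 : ℝ) ^ (r : ℕ) * esF (univ.erase j) (r : ℕ) lam
  have hVS : Vm * Sm = Matrix.diagonal (fun j => Del n lam j) := by
    ext l j
    rw [Matrix.mul_apply]
    have : ∀ r : Fin n, Vm l r * Sm r j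
        = (-1 : ℝ) ^ (r : ℕ) * esF (univ.erase j) (r : ℕ) lam * lam l ^ (n - 1 - (r : ℕ)) := by
      intro r; simp only [Vm, Sm, Matrix.of_apply]; ring
    rw [Finset.sum_congr rfl fun r _ => this r]
    rw [Fin.sum_univ_eq_sum_range
      (fun r => (-1 : ℝ) ^ r * esF (univ.erase j) r lam * lam l ^ (n - 1 - r))]
    rw [sum_esF_eval hn hinj j l, Matrix.diagonal_apply]
    rcases eq_or_ne l j with rfl | hlj
    · simp
    · simp [hlj]
  have hdiag : (Matrix.diagonal (fun j => Del n lam j)).det ≠ 0 := by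
    rw [Matrix.det_diagonal]
    exact Finset.prod_ne_zero_iff.2 fun j _ => Del_ne hinj j
  have hVSdet : Vm.det * Sm.det ≠ 0 := by
    rw [← Matrix.det_mul, hVS]; exact hdiag
  have hSm : Sm.det ≠ 0 := fun h => hVSdet (by rw [h, mul_zero])
  have hSY : Sm = Matrix.of fun r j : Fin n => (-1 : ℝ) ^ (r : ℕ) * Ym.transpose r j := rfl
  rw [hSY, Matrix.det_mul_column, Matrix.det_transpose] at hSm
  exact fun h => hSm (by rw [h, mul_zero])

lemma esym_zero (lam : Fin n → ℝ) : esym n 0 lam = 1 := esF_zero univ lam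

/-- the Killing-tensor polynomial -/
def Kpoly (n r : ℕ) (lam : Fin n → ℝ) : Polynomial ℝ :=
  ∑ k ∈ range r, Polynomial.C ((-1 : ℝ) ^ k * esym n k lam) * Polynomial.X ^ (r - 1 - k)

lemma Kpoly_eval {r : ℕ} (hr : 1 ≤ r) (lam : Fin n → ℝ) (l : Fin n) :
    (Kpoly n r lam).eval (lam l) = Kd n r lam l := by
  rw [Kpoly, Polynomial.eval_finset_sum, Kd_sum hr]
  refine Finset.sum_congr rfl fun k _ => ?_
  simp

lemma Kpoly_natDegree (r : ℕ) (lam : Fin n → ℝ) : (Kpoly n r lam).natDegree ≤ r - 1 := by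
  refine Polynomial.natDegree_sum_le_of_forall_le _ _ fun k _ => ?_
  exact (Polynomial.natDegree_C_mul_X_pow_le _ _).trans (by omega)

lemma Kpoly_coeff {r : ℕ} (hr : 1 ≤ r) (lam : Fin n → ℝ) {d : ℕ} (hd : d ≤ r - 1) :
    (Kpoly n r lam).coeff d = (-1 : ℝ) ^ (r - 1 - d) * esym n (r - 1 - d) lam := by
  rw [Kpoly, Polynomial.finset_sum_coeff]
  rw [Finset.sum_eq_single (r - 1 - d)]
  · rw [Polynomial.coeff_C_mul_X_pow]
    have : r - 1 - (r - 1 - d) = d := by omega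
    rw [this, if_pos rfl]
  · intro k hk hkne
    rw [Polynomial.coeff_C_mul_X_pow, if_neg]
    have hk' : k < r := Finset.mem_range.1 hk
    omega
  · intro h
    exact absurd (Finset.mem_range.2 (by omega)) h

lemma Kpoly_coeff_high {r : ℕ} (lam : Fin n → ℝ) {d : ℕ} (hd : r - 1 < d) :
    (Kpoly n r lam).coeff d = 0 := by
  rw [Kpoly, Polynomial.finset_sum_coeff]
  refine Finset.sum_eq_zero fun k hk => ?_
  rw [Polynomial.coeff_C_mul_X_pow, if_neg]
  have hk' : k < r := Finset.mem_range.1 hk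
  omega

/-- the β-step: coefficients of the F-block vanish -/
lemma beta_zero (hn : 2 ≤ n) {lam : Fin n → ℝ} (hinj : Function.Injective lam) (a : Fin n)
    (β : Fin (n-1) → ℝ)
    (h : ∀ l : Fin n, l ≠ a →
      ∑ j : Fin (n-1), β j * (Kd n ((j:ℕ)+2) lam l - Kd n ((j:ℕ)+2) lam a) = 0) :
    ∀ j, β j = 0 := by
  classical
  set P : Polynomial ℝ := ∑ j : Fin (n-1), Polynomial.C (β j) *
    (Kpoly n ((j:ℕ)+2) lam - Polynomial.C (Kd n ((j:ℕ)+2) lam a)) with hPdef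
  have hPeval : ∀ l : Fin n, P.eval (lam l) = 0 := by
    intro l
    have : P.eval (lam l) = ∑ j : Fin (n-1),
        β j * (Kd n ((j:ℕ)+2) lam l - Kd n ((j:ℕ)+2) lam a) := by
      rw [hPdef, Polynomial.eval_finset_sum]
      refine Finset.sum_congr rfl fun j _ => ?_
      rw [Polynomial.eval_mul, Polynomial.eval_C, Polynomial.eval_sub, Polynomial.eval_C,
        Kpoly_eval (by omega)]
    rw [this]
    rcases eq_or_ne l a with rfl | hla
    · exact Finset.sum_eq_zero fun j _ => by rw [sub_self, mul_zero]
    · exact h l hla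
  have hPdeg : P.natDegree ≤ n - 1 := by
    refine Polynomial.natDegree_sum_le_of_forall_le _ _ fun j _ => ?_
    refine (Polynomial.natDegree_mul_le).trans ?_
    rw [Polynomial.natDegree_C, zero_add]
    refine (Polynomial.natDegree_sub_le _ _).trans ?_
    rw [Polynomial.natDegree_C]
    have h1 : (Kpoly n ((j:ℕ)+2) lam).natDegree ≤ (j:ℕ)+1 := by
      simpa using Kpoly_natDegree ((j:ℕ)+2) lam
    have hj : (j:ℕ) < n - 1 := j.2
    omega
  have hP0 : P = 0 := by
    refine Polynomial.eq_zero_of_natDegree_lt_card_of_eval_eq_zero P hinj hPeval ?_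
    rw [Fintype.card_fin]
    omega
  -- now extract coefficients downward
  have hcoeff : ∀ j : Fin (n-1), P.coeff ((j:ℕ)+1)
      = ∑ j' : Fin (n-1), β j' *
          (if (j:ℕ) ≤ (j':ℕ) then (-1:ℝ)^((j':ℕ) - (j:ℕ)) * esym n ((j':ℕ)-(j:ℕ)) lam else 0) := by
    intro j
    rw [hPdef, Polynomial.finset_sum_coeff]
    refine Finset.sum_congr rfl fun j' _ => ?_
    rw [Polynomial.coeff_C_mul, Polynomial.coeff_sub,
      Polynomial.coeff_C, if_neg (by omega : ¬ ((j:ℕ)+1 = 0)), sub_zero]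
    congr 1
    rcases le_or_gt (j:ℕ) (j':ℕ) with hle | hlt
    · rw [if_pos hle, Kpoly_coeff (by omega) lam (d := (j:ℕ)+1) (by omega)]
      have : (j':ℕ) + 2 - 1 - ((j:ℕ)+1) = (j':ℕ) - (j:ℕ) := by omega
      rw [this]
    · rw [if_neg (not_le.2 hlt), Kpoly_coeff_high lam (by omega)]
  have key : ∀ d : ℕ, ∀ j : Fin (n-1), (n - 2 - (j:ℕ)) = d → β j = 0 := by
    intro d
    induction d using Nat.strong_induction_on with
    | _ d ih =>
      intro j hj
      have h0 : P.coeff ((j:ℕ)+1) = 0 := by rw [hP0, Polynomial.coeff_zero]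
      rw [hcoeff j] at h0
      rw [Finset.sum_eq_single j] at h0
      · rw [if_pos le_rfl, Nat.sub_self, pow_zero, esym_zero, one_mul, mul_one] at h0
        exact h0
      · intro j' _ hne
        rcases le_or_gt (j':ℕ) (j:ℕ) with hle | hlt
        · have : ¬ ((j:ℕ) ≤ (j':ℕ)) := by
            intro hc
            exact hne (Fin.ext (le_antisymm hle hc))
          rw [if_neg this, mul_zero]
        · have hj' : (j':ℕ) < n - 1 := j'.2
          have : β j' = 0 := ih (n - 2 - (j':ℕ)) (by omega) j' rfl
          rw [this, zero_mul]
      · intro hmem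
        exact absurd (Finset.mem_univ j) hmem
  intro j
  exact key _ j rfl


/-- the chosen point: `λ_j = j + 1` -/
def lamS (n : ℕ) : Fin n → ℝ := fun j => (j : ℕ) + 1

lemma lamS_inj : Function.Injective (lamS n) := by
  intro i j h
  have : ((i : ℕ) : ℝ) = ((j : ℕ) : ℝ) := by
    simpa [lamS] using h
  exact Fin.ext (by exact_mod_cast this)

lemma lamS_pos (i : Fin n) : 0 < lamS n i := by
  have : (0:ℝ) ≤ (i : ℕ) := Nat.cast_nonneg _
  simp only [lamS]; linarith

lemma lamS_prod_ne : (∏ i, lamS n i) ≠ 0 :=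
  Finset.prod_ne_zero_iff.2 fun i _ => (lamS_pos i).ne'

lemma esym_card (lam : Fin n → ℝ) : esym n n lam = ∏ i, lam i := by
  have hps : Finset.powersetCard n (univ : Finset (Fin n)) = {univ} := by
    have := Finset.powersetCard_self (univ : Finset (Fin n))
    rwa [Finset.card_univ, Fintype.card_fin] at this
  rw [esym, hps, Finset.sum_singleton]

lemma qf_ne : qf n (lamS n) n ≠ 0 := by
  rw [qf, esym_card]
  exact mul_ne_zero (pow_ne_zero _ (by norm_num)) lamS_prod_ne

lemma gfun_lamS_ne (m : ℕ) (k : Fin n) : gfun n m (lamS n) k ≠ 0 :=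
  div_ne_zero (pow_ne_zero _ (lamS_pos k).ne') (Del_ne lamS_inj k)

/-- the special index -/
def aidx (N : ℕ) (hN : 2 ≤ N) : Fin N := ⟨N - 1, by omega⟩

section Main
variable (hn : 2 ≤ n)
include hn

lemma aidx_val : ((aidx n hn : Fin n) : ℕ) = n - 1 := rfl

lemma lamS_sub_pos {i : Fin n} (hia : i ≠ aidx n hn) : 0 < lamS n (aidx n hn) - lamS n i := by
  have h1 : (i : ℕ) < n - 1 := by
    have h2 := i.2
    rcases Nat.lt_or_ge (i : ℕ) (n-1) with h | h
    · exact h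
    · exfalso
      refine hia (Fin.ext ?_)
      rw [aidx_val hn]
      omega
  have h3 : ((i : ℕ) : ℝ) < ((n - 1 : ℕ) : ℝ) := by exact_mod_cast h1
  have h4 : lamS n (aidx n hn) = ((n - 1 : ℕ) : ℝ) + 1 := rfl
  have h5 : lamS n i = ((i : ℕ) : ℝ) + 1 := rfl
  rw [h4, h5]
  linarith

lemma Del_lamS_pos : 0 < Del n (lamS n) (aidx n hn) := by
  refine Finset.prod_pos fun i hi => ?_
  exact lamS_sub_pos hn (Finset.mem_erase.1 hi).1

lemma Gaa_neg (m : ℕ) (hm : m ≤ n - 1) : Gmat n m (lamS n) (aidx n hn) (aidx n hn) < 0 := by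
  set a := aidx n hn with ha
  rw [Gmat_diag lamS_inj]
  have hDel := Del_lamS_pos hn
  -- the sum S
  set S : ℝ := ∑ k ∈ univ.erase a, ∏ i ∈ (univ.erase a).erase k, (lamS n a - lamS n i)
    with hS
  set i0 : Fin n := ⟨n - 2, by omega⟩ with hi0
  have hi0a : i0 ≠ a := by
    refine Fin.ne_of_val_ne ?_
    rw [ha, aidx_val hn]
    simp only [hi0]
    omega
  have hi0mem : i0 ∈ univ.erase a := Finset.mem_erase.2 ⟨hi0a, Finset.mem_univ _⟩
  have hPpos : ∀ k ∈ univ.erase a, 0 < ∏ i ∈ (univ.erase a).erase k, (lamS n a - lamS n i) := by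
    intro k _
    refine Finset.prod_pos fun i hi => ?_
    exact lamS_sub_pos hn (Finset.mem_erase.1 (Finset.mem_erase.1 hi).2).1
  have hSP : (∏ i ∈ (univ.erase a).erase i0, (lamS n a - lamS n i)) ≤ S := by
    rw [hS]
    exact Finset.single_le_sum (fun k hk => (hPpos k hk).le) hi0mem
  have hone : lamS n a - lamS n i0 = 1 := by
    have h4 : lamS n a = ((n - 1 : ℕ) : ℝ) + 1 := by rw [ha]; rfl
    have h5 : lamS n i0 = ((n - 2 : ℕ) : ℝ) + 1 := by rw [hi0]; rfl
    have h1 : ((n - 1 : ℕ) : ℝ) = ((n - 2 : ℕ) : ℝ) + 1 := by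
      have h6 : n - 1 = (n - 2) + 1 := by omega
      rw [h6]; push_cast; ring
    rw [h4, h5, h1]; ring
  have hDelP : Del n (lamS n) a = ∏ i ∈ (univ.erase a).erase i0, (lamS n a - lamS n i) := by
    rw [Del_factor (Ne.symm hi0a), hone, one_mul]
  have hDS : Del n (lamS n) a ≤ S := by rw [hDelP]; exact hSP
  have hx : (0:ℝ) < lamS n a := lamS_pos a
  have hmx : (m : ℝ) < lamS n a := by
    have h1 : (m : ℕ) ≤ n - 1 := hm
    have h2 : ((m : ℕ) : ℝ) ≤ ((n-1 : ℕ) : ℝ) := by exact_mod_cast h1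
    have h4 : lamS n a = ((n - 1 : ℕ) : ℝ) + 1 := by rw [ha]; rfl
    rw [h4]
    linarith
  have hnum : (m : ℝ) * lamS n a ^ (m - 1) * Del n (lamS n) a - lamS n a ^ m * S < 0 := by
    have key : (m : ℝ) * lamS n a ^ (m - 1) * Del n (lamS n) a
        < lamS n a ^ m * Del n (lamS n) a := by
      rcases Nat.eq_zero_or_pos m with rfl | hm1
      · simpa using mul_pos (pow_pos hx 0) hDel
      · have hxp : lamS n a ^ m = lamS n a ^ (m - 1) * lamS n a := by
          rw [← pow_succ]
          congr 1
          omega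
        rw [hxp]
        have hppos : 0 < lamS n a ^ (m-1) * Del n (lamS n) a := mul_pos (pow_pos hx _) hDel
        calc (m : ℝ) * lamS n a ^ (m - 1) * Del n (lamS n) a
            = (m : ℝ) * (lamS n a ^ (m-1) * Del n (lamS n) a) := by ring
          _ < lamS n a * (lamS n a ^ (m-1) * Del n (lamS n) a) := by
              exact mul_lt_mul_of_pos_right hmx hppos
          _ = lamS n a ^ (m - 1) * lamS n a * Del n (lamS n) a := by ring
    have h2 : lamS n a ^ m * Del n (lamS n) a ≤ lamS n a ^ m * S :=
      mul_le_mul_of_nonneg_left hDS (pow_pos hx m).le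
    linarith
  have hsq : 0 < (Del n (lamS n) a) ^ 2 := pow_pos hDel 2
  exact div_neg_of_neg_of_pos hnum hsq

lemma det_Am_ne (m : ℕ) (hm : m ≤ n - 1) :
    (Matrix.of fun j r : Fin n => Dmat n m ((r:ℕ)+1) (lamS n) j (aidx n hn)).det ≠ 0 := by
  classical
  set a := aidx n hn with ha
  set Ym : Matrix (Fin n) (Fin n) ℝ :=
    Matrix.of fun j r : Fin n => esF (univ.erase j) (r : ℕ) (lamS n) with hYm
  set dg : Fin n → ℝ := fun j => if j = a then Gmat n m (lamS n) a a
    else gfun n m (lamS n) a / (lamS n a - lamS n j) with hdg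
  have hAm : (Matrix.of fun j r : Fin n => Dmat n m ((r:ℕ)+1) (lamS n) j a)
      = Matrix.of fun j r : Fin n =>
          dg j * (Matrix.of (fun j' r' : Fin n => (-1:ℝ)^(r':ℕ) * Ym j' r') j r) := by
    ext j r
    simp only [Matrix.of_apply]
    have hr1 : ((r:ℕ)+1) - 1 = (r:ℕ) := by omega
    rcases eq_or_ne j a with rfl | hja
    · rw [Dmat_diag lamS_inj _ (by omega) m, hr1]
      simp only [hdg, if_pos rfl, hYm, Matrix.of_apply, if_true]
      ring
    · rw [Dmat_offdiag lamS_inj hja (by omega) m, hr1]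
      simp only [hdg, if_neg hja, hYm, Matrix.of_apply]
      ring
  rw [hAm, Matrix.det_mul_column, Matrix.det_mul_row]
  refine mul_ne_zero ?_ (mul_ne_zero ?_ ?_)
  · refine Finset.prod_ne_zero_iff.2 fun j _ => ?_
    rcases eq_or_ne j a with rfl | hja
    · simpa only [hdg, if_pos rfl] using (Gaa_neg hn m hm).ne
    · simp only [hdg, if_neg hja]
      exact div_ne_zero (gfun_lamS_ne m a) (lamS_sub_pos hn hja).ne'
  · refine Finset.prod_ne_zero_iff.2 fun r _ => ?_
    exact pow_ne_zero _ (by norm_num)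
  · exact det_Y_ne (by omega) lamS_inj

omit hn in
lemma exists_good_t (Am Wm : Matrix (Fin n) (Fin n) ℝ) (hAm : Am.det ≠ 0) :
    ∃ t : ℝ, t ≠ 0 ∧
      (Matrix.of fun j r : Fin n => (1/2) * t^2 * Am j r + Wm j r).det ≠ 0 := by
  have hcont : Continuous fun e : ℝ => (Am + e • Wm).det := by
    refine Continuous.matrix_det ?_
    exact continuous_const.add (continuous_id.smul continuous_const)
  have h0 : (Am + (0:ℝ) • Wm).det ≠ 0 := by simpa using hAm
  have hev : ∀ᶠ e in nhds (0:ℝ), (Am + e • Wm).det ≠ 0 :=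
    hcont.continuousAt.eventually_ne h0
  have hev' : ∀ᶠ e in nhdsWithin (0:ℝ) (Set.Ioi 0),
      (Am + e • Wm).det ≠ 0 ∧ e ∈ Set.Ioi (0:ℝ) :=
    Filter.Eventually.and (hev.filter_mono nhdsWithin_le_nhds) self_mem_nhdsWithin
  obtain ⟨e, hedet, hepos⟩ := hev'.exists
  have hepos' : (0:ℝ) < e := hepos
  refine ⟨Real.sqrt (2/e), ?_, ?_⟩
  · have : (0:ℝ) < 2/e := by positivity
    exact (Real.sqrt_pos.2 this).ne'
  · have hsq : Real.sqrt (2/e) ^ 2 = 2/e := Real.sq_sqrt (by positivity)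
    have hM : (Matrix.of fun j r : Fin n => (1/2) * Real.sqrt (2/e)^2 * Am j r + Wm j r)
        = (1/e) • (Am + e • Wm) := by
      ext j r
      simp only [Matrix.of_apply, Matrix.smul_apply, Matrix.add_apply, smul_eq_mul, hsq]
      field_simp
    rw [hM, Matrix.det_smul]
    exact mul_ne_zero (pow_ne_zero _ (by positivity)) hedet

omit hn in
lemma KGfun_gfun (m s : ℕ) (lam : Fin n → ℝ) (i : Fin n) :
    KGfun n m s lam i = Kd n s lam i * gfun n m lam i := by
  rw [KGfun, gfun, mul_div_assoc]

theorem main (m : ℕ) (hm : m ≤ n - 1) (c : ℤ → ℝ) :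
    ∃ x : (Fin n → ℝ) × (Fin n → ℝ),
      Function.Injective x.1 ∧ (1 ≤ m → ∏ i, x.1 i ≠ 0) ∧
      LinearIndependent ℝ
        (Sum.elim
          (fun j : Fin n => fderiv ℝ (Hfun n m c ((j : ℕ) + 1)) x)
          (fun j : Fin (n-1) => fderiv ℝ (Ffun n m c ((j : ℕ) + 2)) x)) := by
  classical
  have hinj : Function.Injective (lamS n) := lamS_inj
  have hDel : ∀ i, Del n (lamS n) i ≠ 0 := Del_ne hinj
  have hq : qf n (lamS n) n ≠ 0 := qf_ne
  set lam : Fin n → ℝ := lamS n with hlam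
  set a : Fin n := aidx n hn with hadef
  set Am : Matrix (Fin n) (Fin n) ℝ :=
    Matrix.of fun j r : Fin n => Dmat n m ((r:ℕ)+1) lam j a with hAmdef
  set Wm : Matrix (Fin n) (Fin n) ℝ :=
    Matrix.of fun j r : Fin n => wcoef n m c ((r:ℕ)+1) lam j with hWmdef
  obtain ⟨t, ht0, hdet⟩ := exists_good_t Am Wm (det_Am_ne hn m hm)
  refine ⟨(lam, (Pi.single a t : Fin n → ℝ)), hinj, fun _ => lamS_prod_ne, ?_⟩
  rw [Fintype.linearIndependent_iff]
  intro γ hγ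
  have happ : ∀ v : PS n,
      (∑ r : Fin n, γ (Sum.inl r)
          * fderiv ℝ (Hfun n m c ((r:ℕ)+1)) (lam, (Pi.single a t : Fin n → ℝ)) v)
      + (∑ s : Fin (n-1), γ (Sum.inr s)
          * fderiv ℝ (Ffun n m c ((s:ℕ)+2)) (lam, (Pi.single a t : Fin n → ℝ)) v)
      = 0 := by
    intro v
    have h1 := congrArg (fun L : PS n →L[ℝ] ℝ => L v) hγ
    simp only [ContinuousLinearMap.coe_sum', Finset.sum_apply,
      ContinuousLinearMap.coe_smul', Pi.smul_apply, smul_eq_mul,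
      ContinuousLinearMap.zero_apply] at h1
    rw [Fintype.sum_sum_type] at h1
    simpa using h1
  have hbeta : ∀ s : Fin (n-1), γ (Sum.inr s) = 0 := by
    refine beta_zero hn hinj a (fun s => γ (Sum.inr s)) ?_
    intro l hla
    have h2 := happ ((0 : Fin n → ℝ), (Pi.single l 1 : Fin n → ℝ))
    have hH0 : ∀ r : Fin n, γ (Sum.inl r)
        * fderiv ℝ (Hfun n m c ((r:ℕ)+1)) (lam, (Pi.single a t : Fin n → ℝ))
          ((0 : Fin n → ℝ), (Pi.single l 1 : Fin n → ℝ)) = 0 := by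
      intro r
      rw [fderiv_Hfun_mu hDel hq]
      have hsl : (Pi.single a t : Fin n → ℝ) l = 0 := by
        simp [Pi.single_apply, hla]
      rw [hsl, mul_zero, mul_zero]
    rw [Finset.sum_congr rfl (fun r _ => hH0 r), Finset.sum_const_zero, zero_add] at h2
    have hb : lam a - lam l ≠ 0 := (lamS_sub_pos hn hla).ne'
    set C : ℝ := t * (gfun n m lam a * gfun n m lam l / (lam a - lam l)) with hCdef
    have hC : C ≠ 0 := mul_ne_zero ht0
      (div_ne_zero (mul_ne_zero (gfun_lamS_ne m a) (gfun_lamS_ne m l)) hb)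
    have hFval : ∀ s : Fin (n-1),
        fderiv ℝ (Ffun n m c ((s:ℕ)+2)) (lam, (Pi.single a t : Fin n → ℝ))
          ((0 : Fin n → ℝ), (Pi.single l 1 : Fin n → ℝ))
        = C * (Kd n ((s:ℕ)+2) lam l - Kd n ((s:ℕ)+2) lam a) := by
      intro s
      rw [fderiv_Ffun_mu hDel hq m c _ t a l hla,
        Gmat_offdiag hinj (Ne.symm hla) m, Gmat_offdiag hinj hla m,
        KGfun_gfun, KGfun_gfun, hCdef]
      have hb2 : lam l - lam a ≠ 0 := sub_ne_zero.2 fun h => (sub_ne_zero.1 hb) h.symm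
      field_simp
      ring
    rw [Finset.sum_congr rfl (fun s _ => by rw [hFval s])] at h2
    have hfac : ∑ s : Fin (n-1), γ (Sum.inr s)
        * (C * (Kd n ((s:ℕ)+2) lam l - Kd n ((s:ℕ)+2) lam a))
        = C * ∑ s : Fin (n-1), γ (Sum.inr s)
            * (Kd n ((s:ℕ)+2) lam l - Kd n ((s:ℕ)+2) lam a) := by
      rw [Finset.mul_sum]
      exact Finset.sum_congr rfl fun s _ => by ring
    rw [hfac] at h2
    rcases mul_eq_zero.1 h2 with h | h
    · exact absurd h hC
    · exact h
  -- α step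
  have halpha : (fun r : Fin n => γ (Sum.inl r)) = 0 := by
    refine Matrix.eq_zero_of_mulVec_eq_zero hdet ?_
    funext j
    have h3 := happ ((Pi.single j 1 : Fin n → ℝ), (0 : Fin n → ℝ))
    have hF0 : ∀ s : Fin (n-1), γ (Sum.inr s)
        * fderiv ℝ (Ffun n m c ((s:ℕ)+2)) (lam, (Pi.single a t : Fin n → ℝ))
          ((Pi.single j 1 : Fin n → ℝ), (0 : Fin n → ℝ)) = 0 := by
      intro s
      rw [hbeta s, zero_mul]
    rw [Finset.sum_congr rfl (fun s _ => hF0 s), Finset.sum_const_zero, add_zero] at h3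
    have hHval : ∀ r : Fin n,
        fderiv ℝ (Hfun n m c ((r:ℕ)+1)) (lam, (Pi.single a t : Fin n → ℝ))
          ((Pi.single j 1 : Fin n → ℝ), (0 : Fin n → ℝ))
        = (1/2) * (Dmat n m ((r:ℕ)+1) lam j a * t^2) + wcoef n m c ((r:ℕ)+1) lam j := by
      intro r
      rw [fderiv_Hfun_la hDel hq]
      congr 2
      rw [Finset.sum_eq_single a]
      · have : (Pi.single a t : Fin n → ℝ) a = t := by simp
        rw [this]
      · intro i _ hia
        have : (Pi.single a t : Fin n → ℝ) i = 0 := by simp [Pi.single_apply, hia]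
        rw [this]
        ring
      · intro hmem; exact absurd (Finset.mem_univ a) hmem
    rw [Finset.sum_congr rfl (fun r _ => by rw [hHval r])] at h3
    show (Matrix.of fun j r : Fin n => (1/2) * t^2 * Am j r + Wm j r).mulVec
      (fun r : Fin n => γ (Sum.inl r)) j = (0 : Fin n → ℝ) j
    rw [Matrix.mulVec, dotProduct]
    simp only [Matrix.of_apply, hAmdef, hWmdef, Pi.zero_apply]
    rw [← h3]
    refine Finset.sum_congr rfl fun r _ => ?_
    ring
  intro i
  rcases i with r | s
  · exact congrFun halpha r
  · exact hbeta s

end Main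



end IndepAux


/-- the `2n-1` functions `H_{m,1},…,H_{m,n}, F_{m,2},…,F_{m,n}` are
functionally independent: there is a point of the phase space (components of `λ`
pairwise distinct, `λ¹⋯λⁿ ≠ 0` when `m ≥ 1`) at which their differentials are
linearly independent; hence `H_{m,1}` is maximally superintegrable. -/
theorem functional_independence_maximal_superintegrability
    (n : ℕ) (hn : 2 ≤ n) (m : ℕ) (hm : m ≤ n - 1) (c : ℤ → ℝ) :
    ∃ x : (Fin n → ℝ) × (Fin n → ℝ),
      Function.Injective x.1 ∧ (1 ≤ m → ∏ i, x.1 i ≠ 0) ∧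
      LinearIndependent ℝ
        (Sum.elim
          (fun j : Fin n => fderiv ℝ (Hfun n m c ((j : ℕ) + 1)) x)
          (fun j : Fin (n-1) => fderiv ℝ (Ffun n m c ((j : ℕ) + 2)) x)) := by
  exact IndepAux.main hn m hm c
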